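/- Let (α_k) be a Markov chain on the nonnegative integers, and suppose there exist N and constants such that for n > N: the one-step drift satisfies E(α_{k+1} − α_k | α_k = n) ≤ −1/2, the conditional variance Var(α_{k+1} − α_k | α_k = n) is bounded by a constant V < ∞, and α_{k+1} ≥ α_k − 1 almost surely. Then almost surely lim inf_{k→∞} α_k < ∞. -/

import Mathlib

/-! A Lyapunov argument with the chain itself as Lyapunov function. By the Markov property,
the law of `α (k + 1)` given a past event inside a fibre `{α k = m}` is its law given the
fibre, so the drift bound holds on every past-measurable `D ⊆ {N < α k}`:
`∫⁻ in D, α (k + 1) + δ μ D ≤ ∫⁻ in D, α k`. Along the decreasing past-measurable events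
`D j = {α K = n, N < α (K + i) for all i ≤ j}` the integrals `∫⁻ in D j, α (K + j)` start
below `n` and drop by at least `δ μ S` per step, where `S` is the event of staying above `N`
forever from time `K` on; hence `μ S = 0`. -/

open MeasureTheory Filter
open scoped ENNReal

namespace RandomWalk

variable {Ω : Type*} {α : ℕ → Ω → ℕ}

abbrev pastSigma (α : ℕ → Ω → ℕ) (k : ℕ) : MeasurableSpace Ω :=
  ⨆ i ∈ Finset.range (k + 1), MeasurableSpace.comap (α i) ⊤

lemma comap_le_pastSigma {i k : ℕ} (h : i ≤ k) : MeasurableSpace.comap (α i) ⊤ ≤ pastSigma α k :=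
  le_biSup (fun i => MeasurableSpace.comap (α i) ⊤) (Finset.mem_range.2 (Nat.lt_succ_of_le h))

lemma measurableSet_pastSigma_preimage {i k : ℕ} (h : i ≤ k) (s : Set ℕ) :
    MeasurableSet[pastSigma α k] (α i ⁻¹' s) :=
  comap_le_pastSigma h _ ⟨s, trivial, rfl⟩

variable [MeasurableSpace Ω] {μ : Measure Ω}

lemma pastSigma_le (hmeas : ∀ k, Measurable (α k)) (k : ℕ) : pastSigma α k ≤ ‹_› :=
  iSup₂_le fun i _ => (hmeas i).comap_le

def IsMarkov (μ : Measure Ω) (α : ℕ → Ω → ℕ) : Prop :=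
  ∀ k (g : ℕ → ℝ), μ[(fun ω => g (α (k + 1) ω)) | pastSigma α k]
    =ᵐ[μ] μ[(fun ω => g (α (k + 1) ω)) | MeasurableSpace.comap (α k) ⊤]

def HasDriftAbove (μ : Measure Ω) (α : ℕ → Ω → ℕ) (N : ℕ) (δ : ℝ) : Prop :=
  ∀ k n, N < n → μ {ω | α k ω = n} ≠ 0 →
    (∫ ω in {ω | α k ω = n}, ((α (k + 1) ω : ℝ) - (n : ℝ)) ∂μ) ≤ -δ * (μ {ω | α k ω = n}).toReal

lemma fiber_mul_setIntegral_eq [IsFiniteMeasure μ] (hmeas : ∀ k, Measurable (α k))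
    (hM : IsMarkov μ α) {k m : ℕ} {g : ℕ → ℝ} (hg : Integrable (fun ω => g (α (k + 1) ω)) μ)
    {C : Set Ω} (hC : MeasurableSet[pastSigma α k] C) (hCm : C ⊆ {ω | α k ω = m}) :
    μ.real {ω | α k ω = m} * ∫ ω in C, g (α (k + 1) ω) ∂μ
      = μ.real C * ∫ ω in {ω | α k ω = m}, g (α (k + 1) ω) ∂μ := by
  -- the conditional expectation given `α k` factors through `α k`, so it is constant on fibres
  obtain ⟨φ, -, hφ⟩ := (stronglyMeasurable_condExp (f := fun ω => g (α (k + 1) ω)) (μ := μ)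
    (m := MeasurableSpace.comap (α k) ⊤)).measurable.exists_eq_measurable_comp
  have hconst : ∀ S, MeasurableSet[pastSigma α k] S → S ⊆ {ω | α k ω = m} →
      ∫ ω in S, g (α (k + 1) ω) ∂μ = μ.real S * φ m := by
    intro S hS hSm
    have hS' := pastSigma_le hmeas k S hS
    rw [← setIntegral_condExp (pastSigma_le hmeas k) hg hS,
      setIntegral_congr_ae hS' ((hM k g).mono fun ω h _ => h), hφ]
    simp only [Function.comp_apply]
    rw [setIntegral_congr_fun hS' fun ω hω => congrArg φ (hSm hω), setIntegral_const, smul_eq_mul]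
  rw [hconst C hC hCm, hconst {ω | α k ω = m} (measurableSet_pastSigma_preimage le_rfl {m}) subset_rfl]
  ring

lemma fiber_smul_map_restrict_eq [IsFiniteMeasure μ] (hmeas : ∀ k, Measurable (α k))
    (hM : IsMarkov μ α) {k m : ℕ} {C : Set Ω} (hC : MeasurableSet[pastSigma α k] C)
    (hCm : C ⊆ {ω | α k ω = m}) :
    μ {ω | α k ω = m} • (μ.restrict C).map (α (k + 1))
      = μ C • (μ.restrict {ω | α k ω = m}).map (α (k + 1)) := by
  ext t ht
  have hind := fiber_mul_setIntegral_eq hmeas hM (g := t.indicator 1)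
    ((integrable_const (1 : ℝ)).indicator ((hmeas (k + 1)) ht)) hC hCm
  rw [Measure.smul_apply, Measure.smul_apply, Measure.map_apply (hmeas _) ht,
    Measure.map_apply (hmeas _) ht, Measure.restrict_apply ((hmeas _) ht),
    Measure.restrict_apply ((hmeas _) ht), smul_eq_mul, smul_eq_mul]
  have hint : ∀ s, ∫ ω in s, t.indicator 1 (α (k + 1) ω) ∂μ = μ.real (α (k + 1) ⁻¹' t ∩ s) := by
    intro s
    have hpre : ∀ ω, t.indicator (1 : ℕ → ℝ) (α (k + 1) ω) = (α (k + 1) ⁻¹' t).indicator 1 ω :=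
      fun ω => rfl
    simp only [hpre]
    rw [integral_indicator_one ((hmeas _) ht), measureReal_restrict_apply ((hmeas _) ht)]
  rw [hint, hint] at hind
  simp only [measureReal_def, ← ENNReal.toReal_mul] at hind
  rwa [ENNReal.toReal_eq_toReal_iff' (by finiteness) (by finiteness)] at hind

lemma fiber_mul_setLIntegral_eq [IsFiniteMeasure μ] (hmeas : ∀ k, Measurable (α k))
    (hM : IsMarkov μ α) {k m : ℕ} (f : ℕ → ℝ≥0∞) {C : Set Ω}
    (hC : MeasurableSet[pastSigma α k] C) (hCm : C ⊆ {ω | α k ω = m}) :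
    μ {ω | α k ω = m} * ∫⁻ ω in C, f (α (k + 1) ω) ∂μ
      = μ C * ∫⁻ ω in {ω | α k ω = m}, f (α (k + 1) ω) ∂μ := by
  have h := congrArg (fun ν => ∫⁻ x, f x ∂ν) (fiber_smul_map_restrict_eq hmeas hM hC hCm)
  simpa only [lintegral_smul_measure, lintegral_map (measurable_of_countable f) (hmeas _),
    smul_eq_mul] using h

lemma setLIntegral_add_le_of_setIntegral_sub_le {s : Set Ω} {Y : Ω → ℕ} {n : ℕ} {δ : ℝ}
    (hδ : 0 < δ) (hs₀ : μ s ≠ 0) (hs : μ s ≠ ∞)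
    (h : ∫ ω in s, ((Y ω : ℝ) - n) ∂μ ≤ -δ * (μ s).toReal) :
    ∫⁻ ω in s, (Y ω : ℝ≥0∞) ∂μ + ENNReal.ofReal δ * μ s ≤ n * μ s := by
  have hpos : 0 < (μ s).toReal := ENNReal.toReal_pos hs₀ hs
  -- integrability is forced: otherwise the integral would be the junk value `0`
  have hint : IntegrableOn (fun ω => (Y ω : ℝ) - n) s μ := by
    by_contra hni
    rw [integral_undef hni] at h
    nlinarith [mul_pos hδ hpos]
  have hY : IntegrableOn (fun ω => (Y ω : ℝ)) s μ := by
    simpa [Pi.add_def] using hint.add (integrableOn_const hs (C := (n : ℝ)))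
  have hsplit : ∫ ω in s, (Y ω : ℝ) ∂μ = ∫ ω in s, ((Y ω : ℝ) - n) ∂μ + n * (μ s).toReal := by
    rw [← measureReal_def, mul_comm, ← smul_eq_mul, ← setIntegral_const, ← integral_add hint
      (integrableOn_const hs)]
    simp
  have hlin : ∫⁻ ω in s, (Y ω : ℝ≥0∞) ∂μ = ENNReal.ofReal (∫ ω in s, (Y ω : ℝ) ∂μ) := by
    rw [ofReal_integral_eq_lintegral_ofReal hY (ae_of_all _ fun _ => Nat.cast_nonneg _)]
    simp only [ENNReal.ofReal_natCast]
  calc ∫⁻ ω in s, (Y ω : ℝ≥0∞) ∂μ + ENNReal.ofReal δ * μ s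
      = ENNReal.ofReal (∫ ω in s, (Y ω : ℝ) ∂μ + δ * (μ s).toReal) := by
        rw [hlin, ENNReal.ofReal_add (integral_nonneg fun _ => Nat.cast_nonneg _) (by positivity),
          ENNReal.ofReal_mul hδ.le, ENNReal.ofReal_toReal hs]
    _ ≤ ENNReal.ofReal (n * (μ s).toReal) := ENNReal.ofReal_le_ofReal (by linarith)
    _ = n * μ s := by
        rw [ENNReal.ofReal_mul (Nat.cast_nonneg _), ENNReal.ofReal_natCast, ENNReal.ofReal_toReal hs]

lemma setLIntegral_add_le_of_subset_fiber [IsFiniteMeasure μ] (hmeas : ∀ k, Measurable (α k))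
    (hM : IsMarkov μ α) {N : ℕ} {δ : ℝ} (hdrift : HasDriftAbove μ α N δ) (hδ : 0 < δ)
    {k m : ℕ} (hm : N < m) {C : Set Ω} (hC : MeasurableSet[pastSigma α k] C)
    (hCm : C ⊆ {ω | α k ω = m}) :
    ∫⁻ ω in C, (α (k + 1) ω : ℝ≥0∞) ∂μ + ENNReal.ofReal δ * μ C ≤ m * μ C := by
  by_cases h₀ : μ {ω | α k ω = m} = 0
  · have hC₀ : μ C = 0 := measure_mono_null hCm h₀
    simp [setLIntegral_measure_zero _ _ hC₀, hC₀]
  have hfib := setLIntegral_add_le_of_setIntegral_sub_le hδ h₀ (measure_ne_top _ _)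
    (hdrift k m hm h₀)
  rw [← ENNReal.mul_le_mul_iff_right h₀ (measure_ne_top _ _)]
  calc μ {ω | α k ω = m} * (∫⁻ ω in C, (α (k + 1) ω : ℝ≥0∞) ∂μ + ENNReal.ofReal δ * μ C)
      = μ C * (∫⁻ ω in {ω | α k ω = m}, (α (k + 1) ω : ℝ≥0∞) ∂μ
          + ENNReal.ofReal δ * μ {ω | α k ω = m}) := by
        rw [mul_add, fiber_mul_setLIntegral_eq hmeas hM (fun x => (x : ℝ≥0∞)) hC hCm]
        ring
    _ ≤ μ C * (m * μ {ω | α k ω = m}) := by gcongr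
    _ = μ {ω | α k ω = m} * (m * μ C) := by ring

lemma setLIntegral_succ_add_le [IsFiniteMeasure μ] (hmeas : ∀ k, Measurable (α k))
    (hM : IsMarkov μ α) {N : ℕ} {δ : ℝ} (hdrift : HasDriftAbove μ α N δ) (hδ : 0 < δ)
    {k : ℕ} {D : Set Ω} (hD : MeasurableSet[pastSigma α k] D) (hDN : D ⊆ {ω | N < α k ω}) :
    ∫⁻ ω in D, (α (k + 1) ω : ℝ≥0∞) ∂μ + ENNReal.ofReal δ * μ D
      ≤ ∫⁻ ω in D, (α k ω : ℝ≥0∞) ∂μ := by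
  set P : ℕ → Set Ω := fun m => D ∩ {ω | α k ω = m}
  have hPpast : ∀ m, MeasurableSet[pastSigma α k] (P m) := fun m =>
    hD.inter (measurableSet_pastSigma_preimage le_rfl {m})
  have hPmeas : ∀ m, MeasurableSet (P m) := fun m => pastSigma_le hmeas k _ (hPpast m)
  have hPdisj : Pairwise (Function.onFun Disjoint P) := fun m₁ m₂ hne =>
    Set.disjoint_left.2 fun ω h₁ h₂ => hne (h₁.2.symm.trans h₂.2)
  have hDP : D = ⋃ m, P m := by ext ω; simp [P]
  have hpiece : ∀ m, ∫⁻ ω in P m, (α (k + 1) ω : ℝ≥0∞) ∂μ + ENNReal.ofReal δ * μ (P m)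
      ≤ ∫⁻ ω in P m, (α k ω : ℝ≥0∞) ∂μ := by
    intro m
    rw [setLIntegral_congr_fun (hPmeas m) fun ω hω => congrArg Nat.cast hω.2,
      setLIntegral_const]
    by_cases hm : N < m
    · exact setLIntegral_add_le_of_subset_fiber hmeas hM hdrift hδ hm (hPpast m) fun _ h => h.2
    · have hP : P m = ∅ := Set.eq_empty_of_forall_notMem fun ω hω =>
        hm (hω.2 ▸ hDN hω.1)
      simp [hP]
  rw [hDP, lintegral_iUnion hPmeas hPdisj, lintegral_iUnion hPmeas hPdisj,
    measure_iUnion hPdisj hPmeas, ← ENNReal.tsum_mul_left, ← ENNReal.tsum_add]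
  exact ENNReal.tsum_le_tsum hpiece

lemma _root_.ENNReal.eq_zero_of_forall_add_le {a : ℕ → ℝ≥0∞} {c : ℝ≥0∞}
    (h : ∀ j, a (j + 1) + c ≤ a j) (h₀ : a 0 ≠ ∞) : c = 0 := by
  have hsum : ∀ j : ℕ, a j + j * c ≤ a 0 := by
    intro j
    induction j with
    | zero => simp
    | succ j ih =>
      calc a (j + 1) + (j + 1 : ℕ) * c = a (j + 1) + c + j * c := by push_cast; ring
        _ ≤ a j + j * c := by gcongr; exact h j
        _ ≤ a 0 := ih
  by_contra hc
  obtain ⟨j, hj⟩ := ENNReal.exists_nat_mul_gt hc h₀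
  exact (le_add_self.trans (hsum j)).not_gt hj

lemma measure_fiber_inter_forall_gt_eq_zero [IsFiniteMeasure μ] (hmeas : ∀ k, Measurable (α k))
    (hM : IsMarkov μ α) {N : ℕ} {δ : ℝ} (hdrift : HasDriftAbove μ α N δ) (hδ : 0 < δ)
    (K n : ℕ) : μ ({ω | α K ω = n} ∩ {ω | ∀ k, K ≤ k → N < α k ω}) = 0 := by
  set S := {ω | α K ω = n} ∩ {ω | ∀ k, K ≤ k → N < α k ω}
  set D : ℕ → Set Ω := fun j => {ω | α K ω = n} ∩ ⋂ i ∈ Set.Iic j, {ω | N < α (K + i) ω}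
  have hDpast : ∀ j, MeasurableSet[pastSigma α (K + j)] (D j) := fun j =>
    (measurableSet_pastSigma_preimage (Nat.le_add_right K j) {n}).inter <|
      .biInter (Set.to_countable _) fun i hi =>
        measurableSet_pastSigma_preimage (Nat.add_le_add_left hi K) {x | N < x}
  have hDanti : ∀ j, D (j + 1) ⊆ D j := fun j ω hω =>
    ⟨hω.1, Set.biInter_subset_biInter_left (Set.Iic_subset_Iic.2 j.le_succ) hω.2⟩
  have hSD : ∀ j, S ⊆ D j := fun j ω hω =>
    ⟨hω.1, Set.mem_iInter₂.2 fun i _ => hω.2 (K + i) (Nat.le_add_right K i)⟩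
  have hDN : ∀ j, D j ⊆ {ω | N < α (K + j) ω} := fun j ω hω =>
    Set.mem_iInter₂.1 hω.2 j (Set.mem_Iic.2 le_rfl)
  have hstep : ∀ j, ∫⁻ ω in D (j + 1), (α (K + (j + 1)) ω : ℝ≥0∞) ∂μ + ENNReal.ofReal δ * μ S
      ≤ ∫⁻ ω in D j, (α (K + j) ω : ℝ≥0∞) ∂μ := fun j =>
    calc _ ≤ ∫⁻ ω in D j, (α (K + (j + 1)) ω : ℝ≥0∞) ∂μ + ENNReal.ofReal δ * μ (D j) :=
          add_le_add (lintegral_mono_set (hDanti j)) (by gcongr; exact hSD j)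
      _ ≤ _ := setLIntegral_succ_add_le hmeas hM hdrift hδ (hDpast j) (hDN j)
  have hstart : ∫⁻ ω in D 0, (α (K + 0) ω : ℝ≥0∞) ∂μ ≠ ∞ := by
    refine ne_top_of_le_ne_top (ENNReal.mul_ne_top (ENNReal.natCast_ne_top n)
      (measure_ne_top μ (D 0))) ?_
    rw [← setLIntegral_const]
    exact setLIntegral_mono measurable_const fun ω hω => by exact_mod_cast hω.1.le
  have hc := ENNReal.eq_zero_of_forall_add_le hstep hstart
  simpa [(ENNReal.ofReal_pos.2 hδ).ne'] using hc

lemma ae_frequently_le [IsFiniteMeasure μ] (hmeas : ∀ k, Measurable (α k))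
    (hM : IsMarkov μ α) {N : ℕ} {δ : ℝ} (hdrift : HasDriftAbove μ α N δ) (hδ : 0 < δ) :
    ∀ᵐ ω ∂μ, ∃ᶠ k in atTop, α k ω ≤ N := by
  rw [ae_iff]
  refine measure_mono_null (t := ⋃ K, ⋃ n, {ω | α K ω = n} ∩ {ω | ∀ k, K ≤ k → N < α k ω})
    ?_ (measure_iUnion_null fun K => measure_iUnion_null fun n =>
      measure_fiber_inter_forall_gt_eq_zero hmeas hM hdrift hδ K n)
  intro ω hω
  simp only [Set.mem_ofPred_eq, not_frequently, not_le, eventually_atTop] at hω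
  obtain ⟨K, hK⟩ := hω
  exact Set.mem_iUnion₂.2 ⟨K, α K ω, rfl, hK⟩

end RandomWalk

theorem random_walk_liminf_finite_general
    {Ω : Type*} [MeasurableSpace Ω] (μ : Measure Ω) [IsProbabilityMeasure μ]
    (α : ℕ → Ω → ℕ) (hmeas : ∀ k, Measurable (α k))
    (N : ℕ)
    -- Markov property: conditionally on the past, the next state depends only on
    -- the current state.
    (hMarkov : ∀ k (g : ℕ → ℝ),
      μ[(fun ω => g (α (k + 1) ω)) | ⨆ i ∈ Finset.range (k + 1), MeasurableSpace.comap (α i) ⊤]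
        =ᵐ[μ] μ[(fun ω => g (α (k + 1) ω)) | MeasurableSpace.comap (α k) ⊤])
    -- Negative drift above level N:
    (hdrift : ∀ k n, N < n → μ {ω | α k ω = n} ≠ 0 →
      (∫ ω in {ω | α k ω = n}, ((α (k + 1) ω : ℝ) - (n : ℝ)) ∂μ)
        ≤ -(1 / 2) * (μ {ω | α k ω = n}).toReal) :
    ∀ᵐ ω ∂μ, ∃ M : ℕ, {k | α k ω ≤ M}.Infinite := by
  filter_upwards [RandomWalk.ae_frequently_le hmeas hMarkov hdrift one_half_pos] with ω hω
  exact ⟨N, Nat.frequently_atTop_iff_infinite.1 hω⟩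

/-- BKNS random-walk lemma: a Markov chain `α` on the nonnegative integers whose
one-step drift above level `N` is at most `-1/2`, whose conditional variance above
level `N` is bounded, and whose downward steps have size at most `1`, almost surely
satisfies `liminf α_k < ∞`, i.e. visits some bounded region infinitely often. -/
theorem random_walk_liminf_finite
    {Ω : Type*} [MeasurableSpace Ω] (μ : Measure Ω) [IsProbabilityMeasure μ]
    (α : ℕ → Ω → ℕ) (hmeas : ∀ k, Measurable (α k))
    (N : ℕ) (V : ℝ) (hV : 0 ≤ V)
    -- Markov property: conditionally on the past, the next state depends only on
    -- the current state.
    (hMarkov : ∀ k (g : ℕ → ℝ),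
      μ[(fun ω => g (α (k + 1) ω)) | ⨆ i ∈ Finset.range (k + 1), MeasurableSpace.comap (α i) ⊤]
        =ᵐ[μ] μ[(fun ω => g (α (k + 1) ω)) | MeasurableSpace.comap (α k) ⊤])
    -- Negative drift above level N:
    (hdrift : ∀ k n, N < n → μ {ω | α k ω = n} ≠ 0 →
      (∫ ω in {ω | α k ω = n}, ((α (k + 1) ω : ℝ) - (n : ℝ)) ∂μ)
        ≤ -(1 / 2) * (μ {ω | α k ω = n}).toReal)
    -- Bounded conditional second moment (hence variance) above level N:
    (hvar : ∀ k n, N < n → μ {ω | α k ω = n} ≠ 0 →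
      (∫ ω in {ω | α k ω = n}, ((α (k + 1) ω : ℝ) - (n : ℝ)) ^ 2 ∂μ)
        ≤ V * (μ {ω | α k ω = n}).toReal)
    -- Downward steps of size at most 1:
    (hdown : ∀ᵐ ω ∂μ, ∀ k, α k ω ≤ α (k + 1) ω + 1) :
    ∀ᵐ ω ∂μ, ∃ M : ℕ, {k | α k ω ≤ M}.Infinite :=
  random_walk_liminf_finite_general μ α hmeas N hMarkov hdrift
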